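/- arXiv:2001.10771 — 2 statements merged into one kernel-verified Lean document; each statement's English description precedes it below -/
import Mathlib

section
/- Let 2 ≤ m < n be integers, let G ≤ Sym(m), and suppose Ã is a complete prefix code over A_m with |Ã| = n such that the letterwise action of every σ ∈ G maps Ã onto itself. Let H ≤ Sym(n) be the image of the root group R_G(Ã) under the group isomorphism Sym(Ã) ≅ Sym(n) induced by listing Ã in dictionary order as a_0 <_dict a_1 <_dict ⋯ <_dict a_{n−1} and identifying a_i with i. Then there exists an injective group homomorphism from V_n(H) into V_m(G). -/
/-!
The words of a complete prefix code `Ã` with at least two words are nonempty, so the substitution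
`θ : C_n → C_m`, `u ↦ a_{u 0} ‖ a_{u 1} ‖ ⋯`, is a continuous bijection (its inverse decodes
`ζ ∈ C_m` by repeatedly stripping the unique prefix of `ζ` in `Ã`), hence a homeomorphism of
compact Hausdorff spaces. Conjugation by `θ` is an injective homomorphism, and it maps `V_n(H)`
into `V_m(G)`. Write `θ̄ p = a_{p_1} ‖ ⋯ ‖ a_{p_k}` for a finite word `p`. If `σ ∈ G` induces
`π ∈ H` on `Ã`, then `θ (p ‖ π u) = θ̄ p ‖ σ (θ u)`, and `θ̄` maps complete prefix codes to
complete prefix codes, so the table `(P, Q, π_i, π'_i)` over `H` becomes the table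
`(θ̄ P, θ̄ Q, σ_i, σ'_i)` over `G`.
-/

namespace Paper

/-- Concatenation of a finite word with an infinite word. -/
def cat {n : ℕ} (w : List (Fin n)) (ζ : ℕ → Fin n) : ℕ → Fin n :=
  fun i => if h : i < w.length then w[i]'h else ζ (i - w.length)

/-- The finite word `w` is a prefix of the infinite word `ζ`. -/
def IsPref {n : ℕ} (w : List (Fin n)) (ζ : ℕ → Fin n) : Prop :=
  ∀ (i : ℕ) (h : i < w.length), w[i]'h = ζ i

/-- An indexed family of finite words is a complete prefix code: every infinite
word has exactly one member of the family as a prefix. -/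
def IsCPC {n : ℕ} {ι : Type} (P : ι → List (Fin n)) : Prop :=
  ∀ ζ : ℕ → Fin n, ∃! i : ι, IsPref (P i) ζ

/-- `f` is the map described by the table with domain code `P`, range code `Q` and
permutations `σ, τ`: it sends `pᵢ‖σᵢ(u)` to `qᵢ‖τᵢ(u)`. -/
def TableFun {n : ℕ} {ι : Type} (P Q : ι → List (Fin n))
    (σ τ : ι → Equiv.Perm (Fin n)) (f : (ℕ → Fin n) → (ℕ → Fin n)) : Prop :=
  ∀ (i : ι) (u : ℕ → Fin n),
    f (cat (P i) (fun j => σ i (u j))) = cat (Q i) (fun j => τ i (u j))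

/-- A table over a subgroup `H ≤ Sym(n)`. -/
structure Table (n : ℕ) (H : Subgroup (Equiv.Perm (Fin n))) where
  k : ℕ
  P : Fin k → List (Fin n)
  Q : Fin k → List (Fin n)
  σ : Fin k → Equiv.Perm (Fin n)
  τ : Fin k → Equiv.Perm (Fin n)
  σ_mem : ∀ i, σ i ∈ H
  τ_mem : ∀ i, τ i ∈ H
  hP : IsCPC P
  hQ : IsCPC Q

/-- The table `T` induces the map `f`. -/
def Induces {n : ℕ} {H : Subgroup (Equiv.Perm (Fin n))} (T : Table n H)
    (f : (ℕ → Fin n) → (ℕ → Fin n)) : Prop :=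
  TableFun T.P T.Q T.σ T.τ f

/-- The symmetric Thompson group `V_n(H)`, as the set of homeomorphisms of the
Cantor space `C_n = A_n^ℕ` induced by tables over `H`. -/
def Vset (n : ℕ) (H : Subgroup (Equiv.Perm (Fin n))) :
    Set ((ℕ → Fin n) ≃ₜ (ℕ → Fin n)) :=
  { f | ∃ T : Table n H, Induces T ⇑f }

/-- Dictionary order on finite words. -/
def DictLe {N : ℕ} (u v : List (Fin N)) : Prop :=
  u <+: v ∨ ∃ (x s t : List (Fin N)) (α β : Fin N),
    α < β ∧ u = x ++ α :: s ∧ v = x ++ β :: t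

/-- Strict dictionary order. -/
def DictLt {N : ℕ} (u v : List (Fin N)) : Prop := DictLe u v ∧ u ≠ v

section Words

variable {n : ℕ}

def shift {α : Type*} (u : ℕ → α) : ℕ → α := fun j => u (j + 1)

@[simp] lemma cat_nil (ζ : ℕ → Fin n) : cat [] ζ = ζ := by
  funext i; simp [cat]

lemma isPref_cat (w : List (Fin n)) (ζ : ℕ → Fin n) : IsPref w (cat w ζ) := by
  intro i h; simp [cat, h]

@[simp] lemma cat_apply_add_length (w : List (Fin n)) (ζ : ℕ → Fin n) (j : ℕ) :
    cat w ζ (j + w.length) = ζ j := by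
  simp [cat]

lemma cat_injective (w : List (Fin n)) : Function.Injective (cat w) :=
  fun _ _ h => funext fun j => by simpa using congrFun h (j + w.length)

lemma cat_drop_of_isPref {w : List (Fin n)} {ζ : ℕ → Fin n} (h : IsPref w ζ) :
    cat w (fun j => ζ (j + w.length)) = ζ := by
  funext i
  by_cases hi : i < w.length
  · simpa [cat, hi] using h i hi
  · simp only [cat, dif_neg hi]
    congr 1; omega

lemma cat_append (w₁ w₂ : List (Fin n)) (ζ : ℕ → Fin n) :
    cat (w₁ ++ w₂) ζ = cat w₁ (cat w₂ ζ) := by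
  funext i
  rcases lt_or_ge i w₁.length with h₁ | h₁
  · simp [cat, h₁, List.getElem_append_left, show i < w₁.length + w₂.length by omega]
  · rcases lt_or_ge i (w₁.length + w₂.length) with h₂ | h₂
    · simp [cat, List.getElem_append_right h₁, h₂, show i - w₁.length < w₂.length by omega,
        show ¬ i < w₁.length by omega]
    · simp only [cat, List.length_append, show ¬ i < w₁.length by omega,
        show ¬ i < w₁.length + w₂.length by omega, show ¬ i - w₁.length < w₂.length by omega,
        dite_false, Nat.sub_add_eq]

@[simp] lemma cat_cons_apply_zero (x : Fin n) (w : List (Fin n)) (ζ : ℕ → Fin n) :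
    cat (x :: w) ζ 0 = x := by
  simp [cat]

@[simp] lemma shift_cat_cons (x : Fin n) (w : List (Fin n)) (ζ : ℕ → Fin n) :
    shift (cat (x :: w) ζ) = cat w ζ := by
  funext j
  simp [shift, cat]

lemma IsCPC.ne_nil {ι : Type} [Nontrivial ι] [NeZero n] {P : ι → List (Fin n)}
    (hP : IsCPC P) (i : ι) : P i ≠ [] := by
  intro hi
  obtain ⟨j, hji⟩ := exists_ne i
  have hj : IsPref (P j) (cat (P j) fun _ => 0) := isPref_cat _ _
  have hi' : IsPref (P i) (cat (P j) fun _ => 0) := fun l hl => by simp [hi] at hl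
  exact hji ((hP _).unique hj hi')

end Words

section Substitution

variable {m n : ℕ} (A : Fin n → List (Fin m))

def substPrefix (u : ℕ → Fin n) (k : ℕ) : List (Fin m) :=
  (List.ofFn fun i : Fin k => A (u i)).flatten

lemma substPrefix_succ (u : ℕ → Fin n) (k : ℕ) :
    substPrefix A u (k + 1) = A (u 0) ++ substPrefix A (shift u) k := by
  simp [substPrefix, List.ofFn_succ, shift]

lemma substPrefix_prefix_of_le (u : ℕ → Fin n) {k l : ℕ} (h : k ≤ l) :
    substPrefix A u k <+: substPrefix A u l := by
  induction k generalizing u l with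
  | zero => simp [substPrefix]
  | succ k ih =>
    obtain ⟨l, rfl⟩ : ∃ l', l = l' + 1 := ⟨l - 1, by omega⟩
    rw [substPrefix_succ, substPrefix_succ, List.prefix_append_right_inj]
    exact ih _ (by omega)

lemma substPrefix_map {π : Equiv.Perm (Fin n)} {s : Equiv.Perm (Fin m)}
    (hs : ∀ x, (A x).map s = A (π x)) (u : ℕ → Fin n) (k : ℕ) :
    substPrefix A (fun j => π (u j)) k = (substPrefix A u k).map s := by
  simp [substPrefix, List.map_flatten, List.map_ofFn, Function.comp_def, hs]

lemma lt_length_substPrefix_succ (hne : ∀ x, A x ≠ []) (u : ℕ → Fin n) (k : ℕ) :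
    k < (substPrefix A u (k + 1)).length := by
  have hA₀ := List.length_pos_iff.mpr (hne (u 0))
  rw [substPrefix_succ, List.length_append]
  cases k with
  | zero => omega
  | succ k => have := lt_length_substPrefix_succ hne (shift u) k; omega

variable [NeZero m]

/-- The substitution `u ↦ A (u 0) ‖ A (u 1) ‖ ⋯`. When all code words are nonempty the `i`-th
letter already lies in the first `i + 1` blocks, so the default `0` of `getD` is never used. -/
def substitute (u : ℕ → Fin n) : ℕ → Fin m := fun i => (substPrefix A u (i + 1)).getD i 0

lemma continuous_substitute : Continuous (substitute A) :=
  continuous_pi fun i =>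
    (continuous_of_discreteTopology (f := fun t : Fin (i + 1) → Fin n =>
      ((List.ofFn fun j => A (t j)).flatten).getD i 0)).comp
      (continuous_pi fun _ => continuous_apply _)

end Substitution

section Decoding

variable {m n : ℕ} {A : Fin n → List (Fin m)} (hA : IsCPC A)

noncomputable def decodeStep (ζ : ℕ → Fin m) : ℕ → Fin m :=
  fun j => ζ (j + (A (hA ζ).choose).length)

noncomputable def decode (ζ : ℕ → Fin m) : ℕ → Fin n :=
  fun k => (hA ((decodeStep hA)^[k] ζ)).choose

lemma shift_decode (ζ : ℕ → Fin m) : shift (decode hA ζ) = decode hA (decodeStep hA ζ) := by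
  funext k
  simp only [shift, decode, Function.iterate_succ_apply]

lemma cat_decodeStep (ζ : ℕ → Fin m) : cat (A (decode hA ζ 0)) (decodeStep hA ζ) = ζ :=
  cat_drop_of_isPref (hA ζ).choose_spec.1

end Decoding

section SubstitutionBijective

variable {m n : ℕ} {A : Fin n → List (Fin m)} [NeZero m] (hne : ∀ x, A x ≠ [])
include hne

lemma substitute_apply_of_lt (u : ℕ → Fin n) {i k : ℕ} (h : i < k) :
    substitute A u i = (substPrefix A u k).getD i 0 := by
  have hp := substPrefix_prefix_of_le A u (show i + 1 ≤ k by omega)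
  have hi := lt_length_substPrefix_succ A hne u i
  have hk : i < (substPrefix A u k).length := by have := hp.length_le; omega
  rw [substitute, List.getD_eq_getElem _ _ hi, List.getD_eq_getElem _ _ hk]
  exact hp.getElem hi

lemma substitute_eq_cat (u : ℕ → Fin n) :
    substitute A u = cat (A (u 0)) (substitute A (shift u)) := by
  funext i
  by_cases hi : i < (A (u 0)).length
  · rw [cat, dif_pos hi, substitute, substPrefix_succ, List.getD_append _ _ _ _ hi,
      List.getD_eq_getElem _ _ hi]
  · rw [cat, dif_neg hi, substitute_apply_of_lt hne u (show i < i + 2 by omega),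
      substPrefix_succ, List.getD_append_right _ _ _ _ (by omega)]
    exact (substitute_apply_of_lt hne (shift u) (by omega)).symm

lemma isPref_substitute_head (u : ℕ → Fin n) : IsPref (A (u 0)) (substitute A u) := by
  rw [substitute_eq_cat hne]; exact isPref_cat _ _

lemma substitute_cat (w : List (Fin n)) (u : ℕ → Fin n) :
    substitute A (cat w u) = cat (w.flatMap A) (substitute A u) := by
  induction w generalizing u with
  | nil => simp
  | cons x w ih =>
    rw [substitute_eq_cat hne, cat_cons_apply_zero, shift_cat_cons, ih, List.flatMap_cons,
      cat_append]

lemma substitute_perm {π : Equiv.Perm (Fin n)} {s : Equiv.Perm (Fin m)}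
    (hs : ∀ x, (A x).map s = A (π x)) (u : ℕ → Fin n) :
    substitute A (fun j => π (u j)) = fun j => s (substitute A u j) := by
  funext i
  have hi := lt_length_substPrefix_succ A hne u i
  simp only [substitute, substPrefix_map A hs]
  rw [List.getD_eq_getElem _ _ (by simpa using hi), List.getD_eq_getElem _ _ hi,
    List.getElem_map]

lemma isPref_flatMap_substitute {w : List (Fin n)} {u : ℕ → Fin n} (h : IsPref w u) :
    IsPref (w.flatMap A) (substitute A u) := by
  rw [← cat_drop_of_isPref h, substitute_cat hne]
  exact isPref_cat _ _

lemma substitute_cat_perm {π : Equiv.Perm (Fin n)} {s : Equiv.Perm (Fin m)}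
    (hs : ∀ x, (A x).map s = A (π x)) (w : List (Fin n)) (u : ℕ → Fin n) :
    substitute A (cat w fun j => π (u j)) = cat (w.flatMap A) fun j => s (substitute A u j) := by
  rw [substitute_cat hne, substitute_perm hne hs]

variable (hA : IsCPC A)
include hA

lemma substitute_head_eq {u v : ℕ → Fin n} (huv : substitute A u = substitute A v) :
    u 0 = v 0 :=
  (hA _).unique (isPref_substitute_head hne u) (huv ▸ isPref_substitute_head hne v)

lemma substitute_injective : Function.Injective (substitute A) := by
  intro u v huv
  funext k
  induction k generalizing u v with
  | zero => exact substitute_head_eq hne hA huv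
  | succ k ih =>
    have h₀ := substitute_head_eq hne hA huv
    have hshift : substitute A (shift u) = substitute A (shift v) := by
      apply cat_injective (A (u 0))
      rw [← substitute_eq_cat hne, h₀, ← substitute_eq_cat hne, huv]
    exact ih hshift

lemma substitute_decode (ζ : ℕ → Fin m) : substitute A (decode hA ζ) = ζ := by
  funext i
  induction i using Nat.strong_induction_on generalizing ζ with
  | _ i ih =>
    have hlen := List.length_pos_iff.mpr (hne (decode hA ζ 0))
    conv_rhs => rw [← cat_decodeStep hA ζ]
    rw [substitute_eq_cat hne, shift_decode]
    by_cases hi : i < (A (decode hA ζ 0)).length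
    · simp only [cat, dif_pos hi]
    · simp only [cat, dif_neg hi]
      exact ih _ (by omega) _

lemma substitute_surjective : Function.Surjective (substitute A) :=
  fun ζ => ⟨decode hA ζ, substitute_decode hne hA ζ⟩

lemma isPref_flatMap_substitute_iff {w : List (Fin n)} {u : ℕ → Fin n} :
    IsPref (w.flatMap A) (substitute A u) ↔ IsPref w u := by
  refine ⟨fun h => ?_, isPref_flatMap_substitute hne⟩
  obtain ⟨v, hv⟩ :=
    substitute_surjective hne hA fun j => substitute A u (j + (w.flatMap A).length)
  have : u = cat w v := substitute_injective hne hA <| by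
    rw [substitute_cat hne, hv, cat_drop_of_isPref h]
  exact this ▸ isPref_cat w v

lemma isCPC_flatMap {ι : Type} {P : ι → List (Fin n)} (hP : IsCPC P) :
    IsCPC fun i => (P i).flatMap A := by
  intro ζ
  obtain ⟨u, rfl⟩ := substitute_surjective hne hA ζ
  simpa only [isPref_flatMap_substitute_iff hne hA] using hP u

noncomputable def substHomeomorph : (ℕ → Fin n) ≃ₜ (ℕ → Fin m) :=
  (continuous_substitute A).homeoOfEquivCompactToT2
    (f := Equiv.ofBijective _ ⟨substitute_injective hne hA, substitute_surjective hne hA⟩)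

@[simp] lemma coe_substHomeomorph : ⇑(substHomeomorph hne hA) = substitute A := rfl

@[simp] lemma substHomeomorph_symm_substitute (u : ℕ → Fin n) :
    (substHomeomorph hne hA).symm (substitute A u) = u :=
  (substHomeomorph hne hA).symm_apply_apply u

lemma conj_substHomeomorph_mem_Vset {G : Subgroup (Equiv.Perm (Fin m))}
    {H : Subgroup (Equiv.Perm (Fin n))} (hH : ∀ π ∈ H, ∃ s ∈ G, ∀ x, (A x).map s = A (π x))
    {f : (ℕ → Fin n) ≃ₜ (ℕ → Fin n)} (hf : f ∈ Vset n H) :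
    ((substHomeomorph hne hA).symm.trans f).trans (substHomeomorph hne hA) ∈ Vset m G := by
  obtain ⟨T, hT⟩ := hf
  choose σ hσG hσ using fun i => hH _ (T.σ_mem i)
  choose τ hτG hτ using fun i => hH _ (T.τ_mem i)
  refine ⟨⟨T.k, fun i => (T.P i).flatMap A, fun i => (T.Q i).flatMap A, σ, τ, hσG, hτG,
    isCPC_flatMap hne hA T.hP, isCPC_flatMap hne hA T.hQ⟩, fun i ζ => ?_⟩
  obtain ⟨u, rfl⟩ := substitute_surjective hne hA ζ
  rw [← substitute_cat_perm hne (hσ i), ← substitute_cat_perm hne (hτ i), ← hT i u]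
  simp

end SubstitutionBijective

theorem stmt9_general (m n : ℕ) (hm : 2 ≤ m) (hmn : m < n)
    (G : Subgroup (Equiv.Perm (Fin m))) (H : Subgroup (Equiv.Perm (Fin n)))
    (A : Fin n → List (Fin m)) (hA : IsCPC A)
    (hH : ∀ π : Equiv.Perm (Fin n), π ∈ H ↔
      ∃ σ : Equiv.Perm (Fin m), σ ∈ G ∧ ∀ i : Fin n, (A i).map ⇑σ = A (π i)) :
    ∃ Φ : ((ℕ → Fin n) ≃ₜ (ℕ → Fin n)) → ((ℕ → Fin m) ≃ₜ (ℕ → Fin m)),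
      (∀ f ∈ Vset n H, Φ f ∈ Vset m G) ∧
      Set.InjOn Φ (Vset n H) ∧
      ∀ f ∈ Vset n H, ∀ g ∈ Vset n H, Φ (f.trans g) = (Φ f).trans (Φ g) := by
  have : NeZero m := ⟨by omega⟩
  have : Nontrivial (Fin n) := Fin.nontrivial_iff_two_le.mpr (by omega)
  let θ := substHomeomorph hA.ne_nil hA
  refine ⟨fun f => (θ.symm.trans f).trans θ, ?_, ?_, ?_⟩
  · exact fun f => conj_substHomeomorph_mem_Vset hA.ne_nil hA fun π hπ => by
      simpa only [exists_prop] using (hH π).1 hπ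
  · intro f _ g _ hfg
    exact Homeomorph.ext fun x => θ.injective <| by simpa using congr($hfg (θ x))
  · intro f _ g _
    exact Homeomorph.ext fun x => by simp

/-- Let `2 ≤ m < n`, `G ≤ Sym(m)`, and `Ã` a complete prefix code
over `A_m` of size `n` preserved by the letterwise action of `G`, listed in
dictionary order as `a_0 <_dict ⋯ <_dict a_{n-1}`.  If `H ≤ Sym(n)` is the image of
the root group `R_G(Ã)` under the induced identification `Sym(Ã) ≅ Sym(n)`, then
`V_n(H)` embeds in `V_m(G)`. -/
theorem stmt9 (m n : ℕ) (hm : 2 ≤ m) (hmn : m < n)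
    (G : Subgroup (Equiv.Perm (Fin m))) (H : Subgroup (Equiv.Perm (Fin n)))
    (A : Fin n → List (Fin m)) (hA : IsCPC A)
    (hGA : ∀ σ : Equiv.Perm (Fin m), σ ∈ G → ∀ i : Fin n,
      ∃ j : Fin n, (A i).map ⇑σ = A j)
    (hord : ∀ i j : Fin n, i < j → DictLt (A i) (A j))
    (hH : ∀ π : Equiv.Perm (Fin n), π ∈ H ↔
      ∃ σ : Equiv.Perm (Fin m), σ ∈ G ∧ ∀ i : Fin n, (A i).map ⇑σ = A (π i)) :
    ∃ Φ : ((ℕ → Fin n) ≃ₜ (ℕ → Fin n)) → ((ℕ → Fin m) ≃ₜ (ℕ → Fin m)),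
      (∀ f ∈ Vset n H, Φ f ∈ Vset m G) ∧
      Set.InjOn Φ (Vset n H) ∧
      ∀ f ∈ Vset n H, ∀ g ∈ Vset n H, Φ (f.trans g) = (Φ f).trans (Φ g) :=
  stmt9_general m n hm hmn G H A hA hH

end Paper
end

section
/- With notation as in the successor construction and assuming l = |P| ≥ 2: every w ∈ P can be written uniquely in the form w = u‖a_j‖a_0^t with u a finite word over A_m, 1 ≤ j ≤ m−1, and t ≥ 0; and for each 1 ≤ i ≤ k, the i-th successor of w is given by the closed formula (w)'_i = u‖a_{m−1+(m−1−j)k+i}. -/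
/-!
The letters `a_m, …, a_{n-1}` exceed every letter of a code word, and
`(j, i) ↦ m-1+(m-1-j)k+(i+1)` maps `[1, m-1] × [0, k)` bijectively onto their indices,
decreasingly in `j` and increasingly in `i`. The greedy recursion determines the successors
uniquely, so it suffices to check that the formula `(p_s)'_i = u‖a_{m-1+(m-1-j)k+i}` itself
satisfies it. By completeness of `P₀`, every candidate `x‖a_c` below `(p_s)'_i` is the
formula successor `(p_r)'_{i'}` of the code word `p_r = x‖a_j‖a_0^t` determined by `c`. It
remains to see that `(r, i')` is an earlier stage, and the heart of this is the comparison: if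
`p_r < p_s < (p_r)'_{i'}`, then `(p_s)'_i < (p_r)'_{i'}`. Indeed `p_s` then extends the `u` of
`p_r` by a nonzero letter, so either it has the same `u` and a larger `j`, or a longer `u` whose
next letter is small.
-/

namespace Paper

/-- The candidate set at a given stage of the successor recursion for the code
enumerated by `p`: words of the form `x‖a_j` with `x` a strict prefix of an element
of `P`, `m ≤ j ≤ n-1`, which are dictionary-greater than `p s` and have not been
chosen at an earlier stage (`prev`). -/
def Cand {N : ℕ} (m : ℕ) {l : ℕ} (p : Fin l → List (Fin N)) (s : Fin l)
    (prev : Set (List (Fin N))) : Set (List (Fin N)) :=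
  {w | (∃ x : List (Fin N), (∃ u : Fin l, x <+: p u ∧ x ≠ p u) ∧
        ∃ j : Fin N, m ≤ (j : ℕ) ∧ w = x ++ [j]) ∧
       DictLt (p s) w ∧ w ∉ prev}

/-- The set of successors chosen at stages strictly earlier than stage `(s, i)`,
where stages are ordered lexicographically: first in `s`, then in `i`. -/
def Prev {N l k : ℕ} (f : Fin l → Fin k → List (Fin N)) (s : Fin l) (i : Fin k) :
    Set (List (Fin N)) :=
  {w | ∃ (s' : Fin l) (i' : Fin k), (s' < s ∨ (s' = s ∧ i' < i)) ∧ w = f s' i'}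

/-- `f` is the successor assignment for the code enumerated by `p`:
`f s i` (the `i`-th successor `(p_s)'_i`) is the dictionary-least element of the
candidate set at stage `(s, i)`. -/
def IsSuccAssign {N l k : ℕ} (m : ℕ) (p : Fin l → List (Fin N))
    (f : Fin l → Fin k → List (Fin N)) : Prop :=
  ∀ (s : Fin l) (i : Fin k),
    f s i ∈ Cand m p s (Prev f s i) ∧
    ∀ w ∈ Cand m p s (Prev f s i), DictLe (f s i) w

open List

section Words

variable {α : Type*}

theorem prefix_or_eq_append_replicate_of_prefix {w L : List α} {o : α} {N : ℕ}
    (h : w <+: L ++ replicate N o) : w <+: L ∨ ∃ t, w = L ++ replicate t o := by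
  rcases le_total w.length L.length with hle | hle
  · exact .inl ((isPrefix_append_of_length hle).mp h)
  · obtain ⟨d, rfl⟩ := prefix_of_prefix_length_le (prefix_append L _) h hle
    exact .inr ⟨d.length, congrArg (L ++ ·)
      (prefix_replicate_iff.mp ((prefix_append_right_inj L).mp h)).2⟩

theorem length_le_of_append_cons_replicate_eq {U x z : List α} {J e o : α} {T : ℕ}
    (he : e ≠ o) (h : U ++ J :: replicate T o = x ++ e :: z) : x.length ≤ U.length := by
  by_contra! hlt
  have hmem : e ∈ (x ++ e :: z).drop (U.length + 1) := by
    rw [drop_append_of_le_length (by omega)]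
    exact mem_append_right _ (mem_cons_self ..)
  rw [← h, ← singleton_append, ← append_assoc, drop_left' (by simp)] at hmem
  exact he (eq_of_mem_replicate hmem)

theorem append_cons_replicate_inj {u₁ u₂ : List α} {j₁ j₂ o : α} {t₁ t₂ : ℕ}
    (h₁ : j₁ ≠ o) (h₂ : j₂ ≠ o)
    (h : u₁ ++ j₁ :: replicate t₁ o = u₂ ++ j₂ :: replicate t₂ o) :
    u₁ = u₂ ∧ j₁ = j₂ ∧ t₁ = t₂ := by
  have hlen := (length_le_of_append_cons_replicate_eq h₂ h).antisymm
    (length_le_of_append_cons_replicate_eq h₁ h.symm)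
  obtain ⟨rfl, h'⟩ := append_inj h hlen.symm
  obtain ⟨rfl, h'⟩ := cons.inj h'
  exact ⟨rfl, rfl, by simpa using congrArg length h'⟩

theorem exists_eq_append_cons_replicate {o : α} {L : List α} (h : ∃ a ∈ L, a ≠ o) :
    ∃ u j t, j ≠ o ∧ L = u ++ j :: replicate t o := by
  induction L using reverseRecOn with
  | nil => simp at h
  | append_singleton M b ih =>
    by_cases hb : b = o
    · obtain ⟨u, j, t, hj, rfl⟩ := ih (by simpa [hb] using h)
      exact ⟨u, j, t + 1, hj, by simp [replicate_succ', hb]⟩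
    · exact ⟨M, b, 0, hb, by simp⟩

variable [LinearOrder α]

theorem append_cons_lt_append_cons {x X Y : List α} {a b : α} (h : a < b) :
    x ++ a :: X < x ++ b :: Y :=
  append_left_lt (cons_lt_cons_iff.mpr (.inl h))

theorem lt_of_append_lt_append_left {U A B : List α} (h : U ++ A < U ++ B) : A < B := by
  induction U with
  | nil => exact h
  | cons a U ih => exact ih ((cons_lt_cons_iff.mp h).resolve_left (lt_irrefl a)).2

theorem prefix_of_lt_of_lt {x A B v : List α} (hA : x ++ A < v) (hB : v < x ++ B) : x <+: v := by
  induction x generalizing v with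
  | nil => exact nil_prefix
  | cons a x ih =>
    cases v with
    | nil => exact absurd hA (not_lt_nil _)
    | cons b v =>
      rw [cons_append, cons_lt_cons_iff] at hA hB
      rcases hA with hab | ⟨rfl, hA⟩
      · rcases hB with hba | ⟨rfl, -⟩
        exacts [absurd (hab.trans hba) (lt_irrefl a), absurd hab (lt_irrefl b)]
      · rcases hB with hba | ⟨-, hB⟩
        exacts [absurd hba (lt_irrefl a), cons_prefix_cons.mpr ⟨rfl, ih hA hB⟩]

end Words

section DictOrder

variable {N : ℕ} {u v : List (Fin N)}

theorem dictLe_of_lt (h : u < v) : DictLe u v := by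
  induction h with
  | nil => exact .inl nil_prefix
  | rel h => exact .inr ⟨[], _, _, _, _, h, rfl, rfl⟩
  | cons _ ih =>
    rcases ih with ⟨d, rfl⟩ | ⟨x, s, t, α, β, h, rfl, rfl⟩
    · exact .inl ⟨d, rfl⟩
    · exact .inr ⟨_ :: x, s, t, α, β, h, rfl, rfl⟩

theorem dictLe_iff_le : DictLe u v ↔ u ≤ v := by
  refine ⟨?_, fun h => (le_iff_lt_or_eq.mp h).elim dictLe_of_lt (· ▸ .inl (prefix_refl u))⟩
  rintro (h | ⟨x, s, t, α, β, h, rfl, rfl⟩)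
  · exact not_lt.mp h.le
  · exact (append_cons_lt_append_cons h).le

theorem dictLt_iff_lt : DictLt u v ↔ u < v := by
  rw [DictLt, dictLe_iff_le, lt_iff_le_and_ne]

end DictOrder

theorem prev_congr {N l k : ℕ} {f g : Fin l → Fin k → List (Fin N)} {s : Fin l} {i : Fin k}
    (h : ∀ s' i', (s' < s ∨ s' = s ∧ i' < i) → f s' i' = g s' i') :
    Prev f s i = Prev g s i := by
  ext w
  constructor <;> rintro ⟨s', i', hlt, rfl⟩
  exacts [⟨s', i', hlt, h s' i' hlt⟩, ⟨s', i', hlt, (h s' i' hlt).symm⟩]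

theorem IsSuccAssign.unique {N l k m : ℕ} {p : Fin l → List (Fin N)}
    {f g : Fin l → Fin k → List (Fin N)} (hf : IsSuccAssign m p f) (hg : IsSuccAssign m p g) :
    f = g := by
  suffices h : ∀ x : Fin l ×ₗ Fin k, f (ofLex x).1 (ofLex x).2 = g (ofLex x).1 (ofLex x).2 from
    funext fun s => funext fun i => h (toLex (s, i))
  intro x
  induction x using WellFoundedLT.induction with
  | _ x ih =>
    obtain ⟨s, i⟩ := x
    have hprev : Prev f s i = Prev g s i :=
      prev_congr fun s' i' hlt => ih (toLex (s', i')) (Prod.Lex.toLex_lt_toLex.mpr hlt)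
    obtain ⟨hfs, hfmin⟩ := hf s i
    obtain ⟨hgs, hgmin⟩ := hg s i
    rw [hprev] at hfs hfmin
    exact le_antisymm (dictLe_iff_le.mp (hfmin _ hgs)) (dictLe_iff_le.mp (hgmin _ hfs))

section SuccIdx

variable {m n k : ℕ}

def succIdx (m k j i : ℕ) : ℕ := m - 1 + (m - 1 - j) * k + (i + 1)

theorem le_succIdx (j i : ℕ) : m ≤ succIdx m k j i := by
  unfold succIdx; omega

theorem succIdx_lt_succIdx {j j' i i' : ℕ} (hj : j ≤ m - 1) (hi : i < k) (hjj : j' < j) :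
    succIdx m k j i < succIdx m k j' i' := by
  have : (m - 1 - j) * k + k ≤ (m - 1 - j') * k := by
    rw [← Nat.succ_mul]; exact Nat.mul_le_mul_right k (by omega)
  unfold succIdx; omega

theorem succIdx_inj {j j' i i' : ℕ} (hj : j ≤ m - 1) (hj' : j' ≤ m - 1) (hi : i < k)
    (hi' : i' < k) (h : succIdx m k j i = succIdx m k j' i') : j = j' ∧ i = i' := by
  rcases lt_trichotomy j j' with hjj | rfl | hjj
  · exact absurd h (succIdx_lt_succIdx hj' hi' hjj).ne'
  · unfold succIdx at h; omega
  · exact absurd h (succIdx_lt_succIdx hj hi hjj).ne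

theorem succIdx_lt (hmn : m ≤ n) (hnm : n - m = k * (m - 1)) {j i : ℕ} (hj : 1 ≤ j)
    (hj' : j ≤ m - 1) (hi : i < k) : succIdx m k j i < n := by
  have : (m - 1 - j) * k + k ≤ (m - 1) * k := by
    rw [← Nat.succ_mul]; exact Nat.mul_le_mul_right k (by omega)
  unfold succIdx; rw [mul_comm] at hnm; omega

theorem exists_succIdx_eq (hnm : n - m = k * (m - 1)) {a : ℕ} (hma : m ≤ a) (han : a < n) :
    ∃ j i, 1 ≤ j ∧ j ≤ m - 1 ∧ i < k ∧ succIdx m k j i = a := by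
  have hk : 0 < k := Nat.pos_of_ne_zero fun hk => by simp [hk] at hnm; omega
  obtain ⟨q, r, hr, hqr⟩ : ∃ q r, r < k ∧ a - m = q * k + r :=
    ⟨_, _, Nat.mod_lt _ hk, (Nat.div_add_mod' (a - m) k).symm⟩
  have hq : q < m - 1 := by
    by_contra! hq
    have := Nat.mul_le_mul_right k hq
    rw [mul_comm] at hnm; omega
  refine ⟨m - 1 - q, r, by omega, by omega, hr, ?_⟩
  unfold succIdx; rw [show m - 1 - (m - 1 - q) = q by omega]; omega

end SuccIdx

section Code

variable {n l m : ℕ} {o : Fin n}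

theorem isPref_getD_iff {w L : List (Fin n)} :
    IsPref w (fun i => L.getD i o) ↔ w <+: L ++ replicate w.length o := by
  rw [IsPref, prefix_iff_getElem?]
  refine forall₂_congr fun i hi => ?_
  rw [getD_eq_getElem?_getD, getElem?_append]
  split_ifs with h
  · simp [getElem?_eq_getElem h, eq_comm]
  · simp [getElem?_eq_none (not_lt.mp h), getElem?_replicate, eq_comm]
    omega

theorem getD_val_lt {L : List (Fin n)} (hL : ∀ a ∈ L, (a : ℕ) < m) (ho : (o : ℕ) < m)
    (i : ℕ) : (L.getD i o : ℕ) < m := by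
  rw [getD_eq_getElem?_getD]
  cases h : L[i]? with
  | none => exact ho
  | some a => exact hL a (mem_of_getElem? h)

variable {q : Fin l → List (Fin n)}

theorem eq_of_prefix_of_complete
    (hqA : ∀ s, ∀ a ∈ q s, (a : ℕ) < m)
    (hqcpc : ∀ ζ : ℕ → Fin n, (∀ i, (ζ i : ℕ) < m) → ∃! s, IsPref (q s) ζ)
    (ho : (o : ℕ) < m) {s r : Fin l} (h : q s <+: q r) : s = r :=
  (hqcpc _ (getD_val_lt (hqA r) ho)).unique
    (isPref_getD_iff.mpr (h.trans (prefix_append _ _)))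
    (isPref_getD_iff.mpr (prefix_append _ _))

theorem exists_prefix_or_eq_append_replicate
    (hqcpc : ∀ ζ : ℕ → Fin n, (∀ i, (ζ i : ℕ) < m) → ∃! s, IsPref (q s) ζ)
    (ho : (o : ℕ) < m) {y : List (Fin n)} (hy : ∀ a ∈ y, (a : ℕ) < m) :
    ∃ r, q r <+: y ∨ ∃ t, q r = y ++ replicate t o :=
  let ⟨r, hr, _⟩ := hqcpc _ (getD_val_lt hy ho)
  ⟨r, prefix_or_eq_append_replicate_of_prefix (isPref_getD_iff.mp hr)⟩

end Code

/-- What the successor formula uses of `P = a_{m-1}‖P₀`, for a complete prefix code `P₀` over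
`A_m`, listed decreasingly; `exists_eq_append` is completeness in finite form. -/
structure IsCodeEnum {n l : ℕ} [NeZero n] (m : ℕ) (p : Fin l → List (Fin n)) : Prop where
  lt_of_mem : ∀ s, ∀ a ∈ p s, (a : ℕ) < m
  eq_of_prefix : ∀ s r, p s <+: p r → s = r
  strictAnti : StrictAnti p
  exists_cons_eq : ∀ s, ∃ (b : Fin n) (y : List (Fin n)), (b : ℕ) = m - 1 ∧ p s = b :: y
  exists_eq_append : ∀ ⦃x : List (Fin n)⦄ ⦃r₀ : Fin l⦄ ⦃j : Fin n⦄, x <+: p r₀ →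
    x ≠ p r₀ → (j : ℕ) < m → (x = [] → (j : ℕ) = m - 1) →
    ∃ r t, p r = x ++ j :: replicate t 0

theorem isCodeEnum_of_complete {n l m : ℕ} [NeZero n] (hm : 1 ≤ m) {b : Fin n}
    (hb : (b : ℕ) = m - 1) {q p : Fin l → List (Fin n)}
    (hqA : ∀ s, ∀ a ∈ q s, (a : ℕ) < m)
    (hqcpc : ∀ ζ : ℕ → Fin n, (∀ i, (ζ i : ℕ) < m) → ∃! s, IsPref (q s) ζ)
    (hp : ∀ s, p s = b :: q s) (hanti : StrictAnti p) : IsCodeEnum m p := by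
  have h0 : ((0 : Fin n) : ℕ) < m := by simp; omega
  have hpf : ∀ s r, p s <+: p r → s = r := fun s r h =>
    eq_of_prefix_of_complete hqA hqcpc h0 (by simpa [hp] using h)
  refine ⟨fun s a => ?_, hpf, hanti, fun s => ⟨b, q s, hb, hp s⟩,
    fun x r₀ j hx hx' hj hxj => ?_⟩
  · rw [hp, mem_cons]
    rintro (rfl | ha)
    exacts [by omega, hqA s a ha]
  obtain ⟨y, hy, hxy⟩ :
      ∃ y : List (Fin n), (∀ a ∈ y, (a : ℕ) < m) ∧ x ++ [j] = b :: y := by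
    cases x with
    | nil => exact ⟨[], by simp, by simp [Fin.ext (hxj rfl ▸ hb.symm)]⟩
    | cons c x =>
      obtain ⟨rfl, hx⟩ := cons_prefix_cons.mp (hp r₀ ▸ hx)
      refine ⟨x ++ [j], fun a ha => ?_, rfl⟩
      rcases mem_append.mp ha with ha | ha
      exacts [hqA r₀ a (hx.subset ha), (mem_singleton.mp ha) ▸ hj]
  -- `x‖a_j‖a_0^∞` has a prefix in `P`, and it cannot be a prefix of the strict prefix `x`.
  obtain ⟨r, hr | ⟨t, hr⟩⟩ := exists_prefix_or_eq_append_replicate hqcpc h0 hy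
  · rcases prefix_concat_iff.mp (hxy ▸ hp r ▸ cons_prefix_cons.mpr ⟨rfl, hr⟩) with h | h
    · exact ⟨r, 0, by simpa using h⟩
    · obtain rfl := hpf r r₀ (h.trans hx)
      exact absurd (h.eq_of_length (le_antisymm h.length_le hx.length_le)).symm hx'
  · exact ⟨r, t, by rw [hp, hr, ← cons_append, ← hxy]; simp⟩

/-- `U s`, `J s`, `T s` are the `u`, `a_j`, `t` of `p s = u‖a_j‖a_0^t`, and `C s i` is the last
letter of the claimed successor `(p s)'_{i+1}`. -/
structure SuccFormula {n l : ℕ} [NeZero n] (m k : ℕ) (p : Fin l → List (Fin n)) where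
  U : Fin l → List (Fin n)
  J : Fin l → Fin n
  T : Fin l → ℕ
  C : Fin l → Fin k → Fin n
  eq_append : ∀ s, p s = U s ++ J s :: replicate (T s) 0
  J_ne_zero : ∀ s, J s ≠ 0
  C_val : ∀ s i, (C s i : ℕ) = succIdx m k (J s) i

namespace SuccFormula

variable {n l m k : ℕ} [NeZero n] {p : Fin l → List (Fin n)} (F : SuccFormula m k p)

def word (s : Fin l) (i : Fin k) : List (Fin n) := F.U s ++ [F.C s i]

theorem nonempty (hmn : m ≤ n) (hnm : n - m = k * (m - 1))
    (hpm : ∀ s, ∀ a ∈ p s, (a : ℕ) < m) (hnz : ∀ s, ∃ a ∈ p s, a ≠ 0) :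
    Nonempty (SuccFormula m k p) := by
  choose U J T hJ hP using fun s => exists_eq_append_cons_replicate (hnz s)
  have hJm : ∀ s, (J s : ℕ) ≤ m - 1 := fun s => by
    have := hpm s (J s) (by simp [hP s]); omega
  have hJ1 : ∀ s, 1 ≤ (J s : ℕ) := fun s =>
    Nat.pos_of_ne_zero (Fin.val_ne_zero_iff.mpr (hJ s))
  exact ⟨⟨U, J, T, fun s i => ⟨_, succIdx_lt hmn hnm (hJ1 s) (hJm s) i.isLt⟩, hP, hJ,
    fun _ _ => rfl⟩⟩

theorem one_le_J (s : Fin l) : 1 ≤ (F.J s : ℕ) :=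
  Nat.pos_of_ne_zero (Fin.val_ne_zero_iff.mpr (F.J_ne_zero s))

theorem J_lt (hp : IsCodeEnum m p) (s : Fin l) : (F.J s : ℕ) < m :=
  hp.lt_of_mem s _ (by simp [F.eq_append s])

theorem J_le (hp : IsCodeEnum m p) (s : Fin l) : (F.J s : ℕ) ≤ m - 1 :=
  Nat.le_pred_of_lt (F.J_lt hp s)

theorem le_C (s : Fin l) (i : Fin k) : m ≤ (F.C s i : ℕ) :=
  F.C_val s i ▸ le_succIdx _ _

theorem eq_of_eq_append {s : Fin l} {u : List (Fin n)} {j : Fin n} {t : ℕ} (hj : j ≠ 0)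
    (h : p s = u ++ j :: replicate t 0) : u = F.U s ∧ j = F.J s ∧ t = F.T s :=
  append_cons_replicate_inj hj (F.J_ne_zero s) (h.symm.trans (F.eq_append s))

theorem eq_of_U_eq_of_J_eq (hp : IsCodeEnum m p) {s r : Fin l} (hU : F.U s = F.U r)
    (hJ : F.J s = F.J r) : s = r := by
  wlog hT : F.T s ≤ F.T r generalizing s r
  · exact (this hU.symm hJ.symm (le_of_not_ge hT)).symm
  refine hp.eq_of_prefix s r ?_
  rw [F.eq_append, F.eq_append, hU, hJ]
  exact (prefix_append_right_inj _).mpr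
    (cons_prefix_cons.mpr ⟨rfl, prefix_replicate_iff.mpr ⟨by simpa, by simp⟩⟩)

theorem word_mem_cand (hp : IsCodeEnum m p) (s : Fin l) (i : Fin k) :
    F.word s i ∈ Cand m p s ∅ := by
  refine ⟨⟨F.U s, ⟨s, ⟨_, (F.eq_append s).symm⟩, fun h => ?_⟩, F.C s i, F.le_C s i,
    rfl⟩, dictLt_iff_lt.mpr ?_, Set.notMem_empty _⟩
  · simpa [h] using congrArg length (F.eq_append s)
  · rw [F.eq_append, word]
    exact append_cons_lt_append_cons (Fin.lt_def.mpr ((F.J_lt hp s).trans_le (F.le_C s i)))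

theorem eq_of_word_eq (hp : IsCodeEnum m p) {s r : Fin l} {i i' : Fin k}
    (h : F.word s i = F.word r i') : s = r ∧ i = i' := by
  obtain ⟨hU, hC⟩ := append_inj' h rfl
  have hC := congrArg Fin.val (singleton_inj.mp hC)
  rw [F.C_val, F.C_val] at hC
  obtain ⟨hJ, hi⟩ := succIdx_inj (F.J_le hp s) (F.J_le hp r) i.isLt i'.isLt hC
  exact ⟨F.eq_of_U_eq_of_J_eq hp hU (Fin.ext hJ), Fin.ext hi⟩

theorem word_lt_word (hp : IsCodeEnum m p) {r s : Fin l} (i : Fin k) {i' : Fin k}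
    (hrs : p r < p s) (hsw : p s < F.word r i') : F.word s i < F.word r i' := by
  rw [F.eq_append r] at hrs
  obtain ⟨y, hy⟩ := prefix_of_lt_of_lt hrs hsw
  obtain ⟨b, y, rfl, hb⟩ : ∃ b y', y = b :: y' ∧ b ≠ 0 := by
    rw [← hy] at hrs
    cases y with
    | nil => exact absurd (lt_of_append_lt_append_left hrs) (not_lt_nil _)
    | cons b y =>
      refine ⟨b, y, rfl, fun hb0 => F.J_ne_zero r ?_⟩
      rcases cons_lt_cons_iff.mp (lt_of_append_lt_append_left hrs) with h | ⟨h, -⟩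
      exacts [absurd (hb0 ▸ h) (Fin.not_lt_zero _), h.trans hb0]
  have hlen := length_le_of_append_cons_replicate_eq hb ((F.eq_append s).symm.trans hy.symm)
  obtain ⟨z, hz⟩ := prefix_of_prefix_length_le ⟨_, hy⟩ ⟨_, (F.eq_append s).symm⟩ hlen
  cases z with
  | nil =>
    rw [append_nil] at hz
    rw [F.eq_append, ← hz] at hrs
    have hJ : F.J r < F.J s := by
      rcases cons_lt_cons_iff.mp (lt_of_append_lt_append_left hrs) with h | ⟨h, -⟩
      · exact h
      · obtain rfl := F.eq_of_U_eq_of_J_eq hp hz h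
        exact absurd hrs (lt_irrefl _)
    rw [word, word, ← hz]
    refine append_cons_lt_append_cons (Fin.lt_def.mpr ?_)
    rw [F.C_val, F.C_val]
    exact succIdx_lt_succIdx (F.J_le hp s) i.isLt hJ
  | cons c z =>
    have hc : (c : ℕ) < m := hp.lt_of_mem s c (by simp [F.eq_append s, ← hz])
    rw [word, word, ← hz, append_assoc, cons_append]
    exact append_cons_lt_append_cons (Fin.lt_def.mpr (hc.trans_le (F.le_C r i')))

/-- A candidate `x‖a_c` with `x = []` is the one case completeness cannot realise, as every code
word begins with `a_{m-1}`; below a successor `(p_s)'_i` it only occurs with `j = m - 1`. -/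
theorem le_of_singleton_lt_word (hp : IsCodeEnum m p) {s : Fin l} {i : Fin k} {a : Fin n}
    {j i₂ : ℕ} (ha : (a : ℕ) = succIdx m k j i₂) (h : [a] < F.word s i) : m - 1 ≤ j := by
  have hma : m ≤ (a : ℕ) := ha ▸ le_succIdx _ _
  cases hU : F.U s with
  | cons c u =>
    have hc : (c : ℕ) < m := hp.lt_of_mem s c (by simp [F.eq_append s, hU])
    rw [word, hU, cons_append] at h
    rcases cons_lt_cons_iff.mp h with h | ⟨h, -⟩
    · exact absurd (Fin.lt_def.mp h) (by omega)
    · exact absurd (congrArg Fin.val h) (by omega)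
  | nil =>
    obtain ⟨b, y, hb, hby⟩ := hp.exists_cons_eq s
    rw [F.eq_append, hU, nil_append, cons.injEq] at hby
    have hJ : (F.J s : ℕ) = m - 1 := hby.1 ▸ hb
    rw [word, hU, nil_append] at h
    have hlt : (a : ℕ) < F.C s i :=
      Fin.lt_def.mp ((cons_lt_cons_iff.mp h).resolve_right (by simp))
    by_contra! hj
    rw [F.C_val, ha] at hlt
    exact absurd hlt (succIdx_lt_succIdx hJ.le i.isLt (hJ ▸ hj)).not_gt

theorem mem_prev_of_lt_word (hnm : n - m = k * (m - 1)) (hp : IsCodeEnum m p) {s : Fin l}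
    {i : Fin k} {w : List (Fin n)} (hw : w ∈ Cand m p s ∅) (hlt : w < F.word s i) :
    w ∈ Prev F.word s i := by
  obtain ⟨⟨x, ⟨r₀, hx, hx'⟩, a, hma, rfl⟩, hsw, -⟩ := hw
  obtain ⟨j, i₂, hj1, hjm, hi₂, ha⟩ := exists_succIdx_eq hnm hma a.isLt
  have hjn : j < n := by omega
  obtain ⟨r, t, hr⟩ := hp.exists_eq_append hx hx' (j := ⟨j, hjn⟩) (by simp; omega)
    fun hx0 => by subst hx0; have := F.le_of_singleton_lt_word hp ha.symm hlt; simp; omega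
  obtain ⟨rfl, hJ, -⟩ := F.eq_of_eq_append (by simp [Fin.ext_iff]; omega) hr
  have hw : F.U r ++ [a] = F.word r ⟨i₂, hi₂⟩ :=
    congrArg (F.U r ++ [·]) (Fin.ext (by rw [F.C_val, ← hJ, ← ha]))
  rw [hw] at hlt hsw ⊢
  rcases lt_trichotomy (toLex (r, (⟨i₂, hi₂⟩ : Fin k))) (toLex (s, i)) with h | h | h
  · exact ⟨r, _, Prod.Lex.toLex_lt_toLex.mp h, rfl⟩
  · obtain ⟨rfl, rfl⟩ := Prod.ext_iff.mp (toLex.injective h)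
    exact absurd hlt (lt_irrefl _)
  · rcases Prod.Lex.toLex_lt_toLex.mp h with hsr | ⟨rfl, hii⟩
    · exact absurd (F.word_lt_word hp i (hp.strictAnti hsr) (dictLt_iff_lt.mp hsw)) hlt.not_gt
    · refine absurd hlt (lt_asymm (append_cons_lt_append_cons (Fin.lt_def.mpr ?_)))
      rw [F.C_val, F.C_val]
      exact Nat.add_lt_add_left (Nat.succ_lt_succ (Fin.lt_def.mp hii)) _

theorem isSuccAssign (hnm : n - m = k * (m - 1)) (hp : IsCodeEnum m p) :
    IsSuccAssign m p F.word := by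
  intro s i
  obtain ⟨hbase, hsw, -⟩ := F.word_mem_cand hp s i
  have hmem : F.word s i ∈ Cand m p s (Prev F.word s i) := by
    refine ⟨hbase, hsw, ?_⟩
    rintro ⟨s', i', hlt, heq⟩
    obtain ⟨rfl, rfl⟩ := F.eq_of_word_eq hp heq
    simp at hlt
  refine ⟨hmem, fun w hw => dictLe_iff_le.mpr (not_lt.mp fun hlt => hw.2.2 ?_)⟩
  exact F.mem_prev_of_lt_word hnm hp ⟨hw.1, hw.2.1, Set.notMem_empty _⟩ hlt

end SuccFormula

/-- **Birget's formula.** In the successor construction with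
`l = |P| ≥ 2`: every `w ∈ P` can be written uniquely as `w = u‖a_j‖a_0^t` with `u`
a word over `A_m`, `1 ≤ j ≤ m-1` and `t ≥ 0`; and for each `1 ≤ i ≤ k` (here
`i : Fin k` is zero-based, representing `i+1`) the `i+1`-st successor of `w` is
`(w)'_{i+1} = u‖a_{m-1+(m-1-j)k+(i+1)}`. -/
theorem stmt14 (m n k l : ℕ) (hm : 2 ≤ m) (hmn : m ≤ n)
    (hnm : n - m = k * (m - 1))
    (q : Fin l → List (Fin n))
    (hqA : ∀ s : Fin l, ∀ a ∈ q s, (a : ℕ) < m)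
    (hqcpc : ∀ ζ : ℕ → Fin n, (∀ i, (ζ i : ℕ) < m) →
      ∃! s : Fin l, IsPref (q s) ζ)
    (p : Fin l → List (Fin n))
    (hp : ∀ s : Fin l, p s = (⟨m - 1, by omega⟩ : Fin n) :: q s)
    (hrev : ∀ s t : Fin l, s < t → DictLt (p t) (p s))
    (f : Fin l → Fin k → List (Fin n)) (hf : IsSuccAssign m p f) :
    ∀ s : Fin l,
      (∃! d : List (Fin n) × Fin n × ℕ,
        (∀ a ∈ d.1, (a : ℕ) < m) ∧
        1 ≤ (d.2.1 : ℕ) ∧ (d.2.1 : ℕ) ≤ m - 1 ∧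
        p s = d.1 ++ d.2.1 :: List.replicate d.2.2 (⟨0, by omega⟩ : Fin n)) ∧
      ∀ (u : List (Fin n)) (j : Fin n) (t : ℕ),
        (∀ a ∈ u, (a : ℕ) < m) → 1 ≤ (j : ℕ) → (j : ℕ) ≤ m - 1 →
        p s = u ++ j :: List.replicate t (⟨0, by omega⟩ : Fin n) →
        ∀ i : Fin k, ∃ c : Fin n,
          (c : ℕ) = m - 1 + (m - 1 - (j : ℕ)) * k + ((i : ℕ) + 1) ∧
          f s i = u ++ [c] := by
  have : NeZero n := ⟨by omega⟩
  have hcode : IsCodeEnum m p := isCodeEnum_of_complete (by omega) rfl hqA hqcpc hp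
    fun s t h => dictLt_iff_lt.mp (hrev s t h)
  obtain ⟨F⟩ := SuccFormula.nonempty (k := k) hmn hnm hcode.lt_of_mem
    fun s => ⟨_, hp s ▸ mem_cons_self, by simp [Fin.ext_iff]; omega⟩
  have hfF : f = F.word := hf.unique (F.isSuccAssign hnm hcode)
  have hne : ∀ j : Fin n, 1 ≤ (j : ℕ) → j ≠ 0 := fun j hj h => by simp [h] at hj
  intro s
  refine ⟨⟨(F.U s, F.J s, F.T s),
    ⟨fun a ha => hcode.lt_of_mem s a (by simp [F.eq_append s, ha]), F.one_le_J s,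
      F.J_le hcode s, F.eq_append s⟩, ?_⟩, ?_⟩
  · rintro ⟨u, j, t⟩ ⟨-, hj, -, hps⟩
    obtain ⟨rfl, rfl, rfl⟩ := F.eq_of_eq_append (hne j hj) hps
    rfl
  · intro u j t _ hj _ hps i
    obtain ⟨rfl, rfl, -⟩ := F.eq_of_eq_append (hne j hj) hps
    exact ⟨F.C s i, F.C_val s i, by rw [hfF]; rfl⟩

end Paper
end
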